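/- arXiv:1412.3484 — 5 statements merged into one kernel-verified Lean document; each statement's English description precedes it below -/
import Mathlib

section
/- Two special points of the upper half plane lie in the same GL₂⁺(ℚ)-orbit if and only if they lie in the same imaginary quadratic field. Moreover, for a special point s in an imaginary quadratic field K, the orbit GL₂⁺(ℚ)·s equals K ∩ ℍ. -/
/-!
A nonscalar rational Möbius transformation fixing `s` clears denominators to a rational
quadratic equation for `s`, so `ℚ(s)` is an imaginary quadratic field; since Möbius
transformations have rational coefficients, the orbit of `s` stays in any field containing `s`,
and it stays in `ℍ` because the imaginary part is scaled by `det / |c s + d|²`. Conversely, if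
`K` is quadratic and `s ∈ K` is not real, then `s, 1` is a `ℚ`-basis of `K`, so every
`z ∈ K ∩ ℍ` is `a s + b` with `a > 0`, the image of `s` under `(a b; 0 1)`.
-/

noncomputable section

/-- The Möbius action of a rational 2×2 matrix on ℂ. -/
def moebQ (a b c d : ℚ) (z : ℂ) : ℂ := ((a : ℂ) * z + b) / ((c : ℂ) * z + d)

/-- A point of the upper half plane is special if it is fixed by some nonscalar
element of GL₂⁺(ℚ). -/
def IsSpecialPt (s : ℂ) : Prop :=
  0 < s.im ∧ ∃ a b c d : ℚ, 0 < a * d - b * c ∧ ¬ (b = 0 ∧ c = 0 ∧ a = d) ∧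
    moebQ a b c d s = s

/-- Two points of ℂ lie in the same GL₂⁺(ℚ)-orbit. -/
def SameGOrbit (s t : ℂ) : Prop :=
  ∃ a b c d : ℚ, 0 < a * d - b * c ∧ moebQ a b c d s = t

/-- An imaginary quadratic field, viewed inside ℂ. -/
def IsImagQuad (K : IntermediateField ℚ ℂ) : Prop :=
  Module.finrank ℚ K = 2 ∧ ∃ z : ℂ, z ∈ K ∧ z.im ≠ 0

open IntermediateField

lemma moebQ_mem {S : Type*} [SetLike S ℂ] [SubfieldClass S ℂ] {K : S} (a b c d : ℚ) {s : ℂ}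
    (hs : s ∈ K) : moebQ a b c d s ∈ K := by
  have hq (q : ℚ) : (q : ℂ) ∈ K := SubfieldClass.ratCast_mem K q
  exact div_mem (add_mem (mul_mem (hq a) hs) (hq b)) (add_mem (mul_mem (hq c) hs) (hq d))

lemma ratCast_mul_add_eq_zero {s : ℂ} (hs : s.im ≠ 0) {p q : ℚ} (h : (p : ℂ) * s + q = 0) :
    p = 0 ∧ q = 0 := by
  have hp : p = 0 := by
    have him : (p : ℝ) * s.im = 0 := by simpa using congrArg Complex.im h
    exact_mod_cast (mul_eq_zero.1 him).resolve_right hs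
  subst hp
  exact ⟨rfl, by simpa using h⟩

lemma moebQ_denom_ne_zero {a b c d : ℚ} (hdet : 0 < a * d - b * c) {s : ℂ} (hs : s.im ≠ 0) :
    (c : ℂ) * s + d ≠ 0 := by
  intro h
  obtain ⟨rfl, rfl⟩ := ratCast_mul_add_eq_zero hs h
  simp at hdet

/-- Also true when `c s + d = 0`, as both sides are then `0`. -/
lemma im_moebQ (a b c d : ℚ) (s : ℂ) :
    (moebQ a b c d s).im = (a * d - b * c) * s.im / Complex.normSq ((c : ℂ) * s + d) := by
  rw [moebQ, Complex.div_im]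
  simp only [Complex.add_re, Complex.add_im, Complex.mul_re, Complex.mul_im,
    Complex.ratCast_re, Complex.ratCast_im, Complex.normSq_apply]
  ring

lemma im_moebQ_pos {a b c d : ℚ} {s : ℂ} (hdet : 0 < a * d - b * c) (hs : 0 < s.im) :
    0 < (moebQ a b c d s).im := by
  rw [im_moebQ]
  exact div_pos (mul_pos (by exact_mod_cast hdet) hs) (Complex.normSq_pos.2 (moebQ_denom_ne_zero hdet hs.ne'))

lemma exists_eq_ratCast_mul_add {K : IntermediateField ℚ ℂ} (hK : Module.finrank ℚ K = 2)
    {s : ℂ} (hsK : s ∈ K) (hs : s.im ≠ 0) {z : ℂ} (hzK : z ∈ K) :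
    ∃ a b : ℚ, z = a * s + b := by
  have hli : LinearIndependent ℚ ![(⟨s, hsK⟩ : K), 1] := by
    refine LinearIndependent.pair_iff.2 fun p q hpq => ratCast_mul_add_eq_zero hs ?_
    simpa [Rat.smul_def] using congrArg Subtype.val hpq
  have hspan := hli.span_eq_top_of_card_eq_finrank (by simp [hK])
  rw [Matrix.range_cons, Matrix.range_cons, Matrix.range_empty, Set.union_empty,
    Set.singleton_union] at hspan
  obtain ⟨a, b, hab⟩ :=
    Submodule.mem_span_pair.1 (hspan ▸ Submodule.mem_top (x := (⟨z, hzK⟩ : K)))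
  refine ⟨a, b, ?_⟩
  simpa [Rat.smul_def] using (congrArg Subtype.val hab).symm

lemma IsSpecialPt.exists_sq_eq {s : ℂ} (hs : IsSpecialPt s) :
    ∃ p q : ℚ, s ^ 2 = (p : ℂ) * s + q := by
  obtain ⟨him, a, b, c, d, hdet, hnonscalar, hfix⟩ := hs
  have hfix' : (a : ℂ) * s + b = s * (c * s + d) := by
    rw [moebQ, div_eq_iff (moebQ_denom_ne_zero hdet him.ne')] at hfix
    linear_combination hfix
  have hc : c ≠ 0 := by
    rintro rfl
    have h : ((a - d : ℚ) : ℂ) * s + (b : ℚ) = 0 := by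
      push_cast at hfix' ⊢
      linear_combination hfix'
    obtain ⟨had, hb⟩ := ratCast_mul_add_eq_zero him.ne' h
    exact hnonscalar ⟨hb, rfl, sub_eq_zero.1 had⟩
  refine ⟨(a - d) / c, b / c, ?_⟩
  have hcC : (c : ℂ) ≠ 0 := by exact_mod_cast hc
  push_cast
  field_simp
  linear_combination -hfix'

open Polynomial in
lemma finrank_adjoin_eq_two_of_sq_eq {s : ℂ} (hs : s.im ≠ 0) {p q : ℚ}
    (hpq : s ^ 2 = (p : ℂ) * s + q) : Module.finrank ℚ ℚ⟮s⟯ = 2 := by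
  set P : ℚ[X] := X ^ 2 - C p * X - C q with hP
  have hPs : aeval s P = 0 := by
    simp only [P, map_sub, map_pow, map_mul, aeval_X, aeval_C, eq_ratCast]
    linear_combination hpq
  have hPdeg : P.natDegree = 2 := by rw [hP]; compute_degree!
  have hPmonic : P.Monic := by rw [hP]; monicity!
  have hint : IsIntegral ℚ s := ⟨P, hPmonic, hPs⟩
  have hnotRat : s ∉ (algebraMap ℚ ℂ).range := by
    rintro ⟨r, rfl⟩
    simp at hs
  have hlower := (minpoly.two_le_natDegree_iff hint).2 hnotRat
  have hupper := natDegree_le_natDegree (minpoly.min ℚ s hPmonic hPs)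
  rw [adjoin.finrank hint]
  omega

lemma IsSpecialPt.isImagQuad_adjoin {s : ℂ} (hs : IsSpecialPt s) : IsImagQuad ℚ⟮s⟯ := by
  obtain ⟨p, q, hpq⟩ := hs.exists_sq_eq
  exact ⟨finrank_adjoin_eq_two_of_sq_eq hs.1.ne' hpq, s, mem_adjoin_simple_self ℚ s, hs.1.ne'⟩

lemma SameGOrbit.mem {S : Type*} [SetLike S ℂ] [SubfieldClass S ℂ] {K : S} {s t : ℂ}
    (h : SameGOrbit s t) (hsK : s ∈ K) : t ∈ K := by
  obtain ⟨a, b, c, d, -, rfl⟩ := h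
  exact moebQ_mem a b c d hsK

lemma SameGOrbit.im_pos {s t : ℂ} (h : SameGOrbit s t) (hs : 0 < s.im) : 0 < t.im := by
  obtain ⟨a, b, c, d, hdet, rfl⟩ := h
  exact im_moebQ_pos hdet hs

lemma sameGOrbit_of_mem {K : IntermediateField ℚ ℂ} (hK : Module.finrank ℚ K = 2) {s z : ℂ}
    (hsK : s ∈ K) (hs : 0 < s.im) (hzK : z ∈ K) (hz : 0 < z.im) : SameGOrbit s z := by
  obtain ⟨a, b, rfl⟩ := exists_eq_ratCast_mul_add hK hsK hs.ne' hzK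
  have ha : (0 : ℝ) < a := by
    simp only [Complex.add_im, Complex.mul_im, Complex.ratCast_re, Complex.ratCast_im, zero_mul,
      add_zero] at hz
    exact pos_of_mul_pos_left hz hs.le
  exact ⟨a, b, 0, 1, by simpa using ha, by simp [moebQ]⟩

/-- Two special points of the upper half plane lie in the same GL₂⁺(ℚ)-orbit iff they
lie in the same imaginary quadratic field; moreover the orbit of a special point `s`
lying in an imaginary quadratic field `K` is exactly `K ∩ ℍ`. -/
theorem stmt1 :
    (∀ s t : ℂ, IsSpecialPt s → IsSpecialPt t →
      (SameGOrbit s t ↔ ∃ K : IntermediateField ℚ ℂ, IsImagQuad K ∧ s ∈ K ∧ t ∈ K)) ∧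
    (∀ (s : ℂ) (K : IntermediateField ℚ ℂ), IsSpecialPt s → IsImagQuad K → s ∈ K →
      {t : ℂ | SameGOrbit s t} = {z : ℂ | z ∈ K ∧ 0 < z.im}) := by
  refine ⟨fun s t hs ht => ⟨fun hst => ?_, ?_⟩, fun s K hs hK hsK => ?_⟩
  · exact ⟨ℚ⟮s⟯, hs.isImagQuad_adjoin, mem_adjoin_simple_self ℚ s,
      hst.mem (mem_adjoin_simple_self ℚ s)⟩
  · rintro ⟨K, ⟨hK, -⟩, hsK, htK⟩
    exact sameGOrbit_of_mem hK hsK hs.1 htK ht.1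
  · ext z
    exact ⟨fun hsz => ⟨hsz.mem hsK, hsz.im_pos hs.1⟩,
      fun ⟨hzK, hz⟩ => sameGOrbit_of_mem hK.1 hsK hs.1 hzK hz⟩
end
end

section
/- Let Γ = PSL₂(ℤ) and, for N ∈ ℕ, let Γ_N be the intersection of Γ with all conjugates g⁻¹Γg where g runs over the coset representatives (a b; 0 d) with a > 0, 0 ≤ b < d, ad = N of the double coset Γ·diag(N,1)·Γ. Then Γ_N = { (a b; c d) ∈ Γ : b ≡ c ≡ 0 mod N and a ≡ d mod N }. -/
/-!
Conjugating `A = (a b; c d)` by `g = (α β; 0 δ)` gives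
`g A g⁻¹ = ((αa + βc)/α, (α²b + αβ(d - a) - β²c)/(αδ); δc/α, (αd - βc)/α)`,
so `g A g⁻¹` is integral exactly when `α ∣ βc`, `α ∣ δc` and `αδ ∣ α²b + αβ(d - a) - β²c`.
If `N = αδ` divides `b`, `c` and `d - a` these all hold. Conversely the representatives
`(N 0; 0 1)` and `(1 0; 0 N)` force `N ∣ c` and `N ∣ b`, and then `(1 1; 0 N)` (for `N > 1`)
forces `N ∣ d - a`.
-/

section Field

variable {K : Type*} [Field K]

theorem upperTriangular_inv {α δ : K} (β : K) (hα : α ≠ 0) (hδ : δ ≠ 0) :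
    (!![α, β; 0, δ])⁻¹ = !![α⁻¹, -β / (α * δ); 0, δ⁻¹] := by
  apply Matrix.inv_eq_right_inv
  rw [Matrix.mul_fin_two, Matrix.one_fin_two]
  simp [hα, hδ]
  field_simp
  ring

theorem upperTriangular_mul_mul_inv {α δ : K} (β : K) (hα : α ≠ 0) (hδ : δ ≠ 0) (a b c d : K) :
    !![α, β; 0, δ] * !![a, b; c, d] * (!![α, β; 0, δ])⁻¹ =
      !![(α * a + β * c) / α, (α ^ 2 * b + α * β * (d - a) - β ^ 2 * c) / (α * δ);
        δ * c / α, (α * d - β * c) / α] := by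
  rw [upperTriangular_inv β hα hδ, Matrix.mul_fin_two, Matrix.mul_fin_two]
  simp only [EmbeddingLike.apply_eq_iff_eq, Matrix.vecCons_inj, and_true]
  refine ⟨⟨?_, ?_⟩, ?_, ?_⟩ <;> field_simp <;> ring

variable [CharZero K]

theorem exists_intCast_eq_div_iff_dvd {n : ℤ} (hn : n ≠ 0) (x : ℤ) :
    (∃ m : ℤ, (x : K) / n = m) ↔ n ∣ x := by
  constructor
  · rintro ⟨m, hm⟩
    refine ⟨m, ?_⟩
    rw [div_eq_iff (Int.cast_ne_zero.mpr hn)] at hm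
    exact_mod_cast hm.trans (mul_comm _ _)
  · rintro ⟨m, rfl⟩
    exact ⟨m, by push_cast; field_simp⟩

theorem upperTriangular_conj_integral_iff {α δ : ℤ} (β : ℤ) (hα : α ≠ 0) (hδ : δ ≠ 0)
    (A : Matrix (Fin 2) (Fin 2) ℤ) :
    (∀ i j : Fin 2, ∃ m : ℤ,
        (!![(α : K), β; 0, δ] * A.map (fun x => (x : K)) * (!![(α : K), β; 0, δ])⁻¹) i j = m) ↔
      α ∣ β * A 1 0 ∧ α ∣ δ * A 1 0 ∧
        α * δ ∣ α ^ 2 * A 0 1 + α * β * (A 1 1 - A 0 0) - β ^ 2 * A 1 0 := by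
  have hA : A.map (fun x => (x : K)) = !![(A 0 0 : K), A 0 1; A 1 0, A 1 1] :=
    Matrix.eta_fin_two _
  rw [hA, upperTriangular_mul_mul_inv _ (Int.cast_ne_zero.mpr hα) (Int.cast_ne_zero.mpr hδ)]
  simp only [Fin.forall_fin_two, Matrix.of_apply, Matrix.cons_val_zero, Matrix.cons_val_one,
    ← Int.cast_mul, ← Int.cast_add, ← Int.cast_sub, ← Int.cast_pow,
    exists_intCast_eq_div_iff_dvd hα, exists_intCast_eq_div_iff_dvd (mul_ne_zero hα hδ),
    dvd_add_right (dvd_mul_right α _), dvd_sub_right (dvd_mul_right α _)]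
  tauto

end Field

theorem stmt2_general (N : ℕ) (hN : 0 < N) (A : Matrix (Fin 2) (Fin 2) ℤ) :
    (∀ α β δ : ℤ, 0 < α → 0 ≤ β → β < δ → α * δ = (N : ℤ) →
      ∀ i j : Fin 2, ∃ m : ℤ,
        ((Matrix.of ![![(α : ℚ), (β : ℚ)], ![0, (δ : ℚ)]]) * A.map (fun x => (x : ℚ)) *
          (Matrix.of ![![(α : ℚ), (β : ℚ)], ![0, (δ : ℚ)]])⁻¹) i j = (m : ℚ)) ↔
    ((N : ℤ) ∣ A 0 1 ∧ (N : ℤ) ∣ A 1 0 ∧ A 0 0 ≡ A 1 1 [ZMOD (N : ℤ)]) := by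
  have hN' : (N : ℤ) ≠ 0 := by exact_mod_cast hN.ne'
  constructor
  · intro h
    have hc : (N : ℤ) ∣ A 1 0 := by
      simpa using ((upperTriangular_conj_integral_iff 0 hN' one_ne_zero A).1
        (h N 0 1 (by positivity) le_rfl one_pos (mul_one _))).2.1
    have hb : (N : ℤ) ∣ A 0 1 := by
      simpa using ((upperTriangular_conj_integral_iff 0 one_ne_zero hN' A).1
        (h 1 0 N one_pos le_rfl (by positivity) (one_mul _))).2.2
    refine ⟨hb, hc, ?_⟩
    rcases (Nat.one_le_iff_ne_zero.mpr hN.ne').eq_or_lt with rfl | hN1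
    · exact Int.modEq_one
    · have hbdac : (N : ℤ) ∣ A 0 1 + (A 1 1 - A 0 0) - A 1 0 := by
        simpa using ((upperTriangular_conj_integral_iff 1 one_ne_zero hN' A).1
          (h 1 1 N one_pos zero_le_one (by exact_mod_cast hN1) (one_mul _))).2.2
      exact Int.modEq_iff_dvd.2 ((dvd_add_right hb).1 ((dvd_sub_left hc).1 hbdac))
  · rintro ⟨hb, hc, had⟩ α β δ hα hβ hβδ hαδ
    rw [← hαδ] at hb hc had
    have hαc : α ∣ A 1 0 := (dvd_mul_right α δ).trans hc
    refine (upperTriangular_conj_integral_iff β hα.ne' (hβ.trans_lt hβδ).ne' A).2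
      ⟨hαc.mul_left β, hαc.mul_left δ, ?_⟩
    exact dvd_sub (dvd_add (hb.mul_left _) ((Int.modEq_iff_dvd.1 had).mul_left _))
      (hc.mul_left _)

/-- The congruence description of Γ_N: an element of Γ = PSL₂(ℤ), represented by an
integer matrix `A` of determinant 1, lies in all the conjugates `g⁻¹ Γ g` as `g` runs
over the coset representatives `(α β; 0 δ)`, `α > 0`, `0 ≤ β < δ`, `αδ = N`, of the
double coset `Γ (N 0; 0 1) Γ` (i.e. each conjugate `g A g⁻¹` has integer entries)
if and only if `b ≡ c ≡ 0 mod N` and `a ≡ d mod N`. -/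
theorem stmt2 (N : ℕ) (hN : 0 < N) (A : Matrix (Fin 2) (Fin 2) ℤ) (hdet : A.det = 1) :
    (∀ α β δ : ℤ, 0 < α → 0 ≤ β → β < δ → α * δ = (N : ℤ) →
      ∀ i j : Fin 2, ∃ m : ℤ,
        ((Matrix.of ![![(α : ℚ), (β : ℚ)], ![0, (δ : ℚ)]]) * A.map (fun x => (x : ℚ)) *
          (Matrix.of ![![(α : ℚ), (β : ℚ)], ![0, (δ : ℚ)]])⁻¹) i j = (m : ℚ)) ↔
    ((N : ℤ) ∣ A 0 1 ∧ (N : ℤ) ∣ A 1 0 ∧ A 0 0 ≡ A 1 1 [ZMOD (N : ℤ)]) :=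
  stmt2_general N hN A
end

section
/- (Sah's Lemma) Let G be a group, M a G-module, and α an element of the center of G. Then every element of H¹(G, M) is killed by the endomorphism x ↦ α·x − x of M. In particular, for any 1-cocycle f : G → M and any g ∈ G, one has (α − 1)·f(g) = (g − 1)·f(α). -/
/-- Sah's Lemma: for a `G`-module `M` and `α` in the center of `G`, every element of
`H¹(G, M)` is killed by `x ↦ α·x − x`; concretely, for any 1-cocycle `f : G → M` the
cocycle `g ↦ α • f g − f g` is a coboundary, and in fact
`(α − 1)·f(g) = (g − 1)·f(α)` for every `g`. -/
theorem stmt11 {G M : Type*} [Group G] [AddCommGroup M] [DistribMulAction G M]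
    (α : G) (hα : α ∈ Subgroup.center G)
    (f : G → M) (hf : ∀ g h : G, f (g * h) = f g + g • f h) :
    (∃ m : M, ∀ g : G, α • f g - f g = g • m - m) ∧
    (∀ g : G, α • f g - f g = g • f α - f α) := by
  have key : ∀ g : G, α • f g - f g = g • f α - f α := by
    intro g
    have h1 := hf α g
    have h2 := hf g α
    rw [Subgroup.mem_center_iff] at hα
    rw [← hα g] at h1
    rw [h2] at h1
    linear_combination (norm := abel_nf) -h1
  exact ⟨⟨f α, key⟩, key⟩
end

section
/- Let K be a number field, n an integer coprime to 2[Γ':Γ] where Γ is a finitely generated subgroup of K^× and Γ' its division group in K^×, and suppose Gal(K(μ_n)/K) ≅ (ℤ/nℤ)^×. Then Γ ∩ (K(μ_n)^×)^p = Γ^p for every prime p dividing n; in particular Γ ∩ K(μ_n)^{×n} = Γ^n. -/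
/-!
Let `p ∣ n` be prime and `x = y ^ p` with `x ∈ Kˣ`, `y ∈ Lˣ`. Since `Gal(L/K) ≅ (ℤ/nℤ)ˣ`, some
automorphism `σ` acts as `ζ ↦ ζ⁻¹` on the roots of unity, and `σ` is central since the group is
abelian. For `τ` fixing `μ_p`, the Kummer cocycle `c = τ y / y ∈ μ_p` is fixed by `σ` (which
commutes with `τ`) and inverted by it, so `c ^ 2 = 1 = c ^ p` and `c = 1` as `p` is odd. Hence
`y ∈ K(μ_p)`, whose degree `d ≤ p - 1` is prime to `p`, and the norm gives `N(y) ^ p = x ^ d`, so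
`x` is a `p`-th power in `K`. Its `p`-th root lies in `Γ'`, hence in `Γ` because `p ∤ [Γ' : Γ]`.
The exponent `n` is reached one prime at a time, the `n`-th roots of unity in `L` absorbing the
ambiguity of the roots.
-/

open IntermediateField Polynomial

theorem Subgroup.mem_of_pow_mem_of_coprime_index {G : Type*} [Group G] {H : Subgroup G}
    [H.Normal] {g : G} {p : ℕ} (hp : p.Coprime H.index) (hg : g ^ p ∈ H) : g ∈ H := by
  rw [← QuotientGroup.eq_one_iff] at hg ⊢
  have hidx : (g : G ⧸ H) ^ H.index = 1 := pow_card_eq_one'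
  simpa [hp] using pow_gcd_eq_one.mpr ⟨hg, hidx⟩

theorem exists_pow_eq_of_pow_eq_pow_of_coprime {G : Type*} [CommGroup G] {a x : G} {p d : ℕ}
    (hpd : p.Coprime d) (h : a ^ p = x ^ d) : ∃ z : G, z ^ p = x := by
  obtain ⟨u, v, huv⟩ := Nat.isCoprime_iff_coprime.mpr hpd
  refine ⟨x ^ u * a ^ v, ?_⟩
  rw [← zpow_natCast, mul_zpow, ← zpow_mul, ← zpow_mul, mul_comm v, zpow_mul a, zpow_natCast, h,
    ← zpow_natCast, ← zpow_mul, ← zpow_add, mul_comm (d : ℤ), huv, zpow_one]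

theorem Subgroup.exists_mem_pow_eq_of_forall_prime_dvd {G H : Type*} [Group G] [CommGroup H]
    (f : G →* H) (Γ : Subgroup G) {n : ℕ} (hn : n ≠ 0)
    (hprime : ∀ p : ℕ, p.Prime → p ∣ n → ∀ x ∈ Γ, (∃ y : H, y ^ p = f x) → ∃ γ ∈ Γ, γ ^ p = x)
    (hroots : ∀ a k : ℕ, a * k ∣ n → ∀ c : H, c ^ k = 1 → ∃ w : H, w ^ a = c)
    {x : G} (hx : x ∈ Γ) {y : H} (hy : y ^ n = f x) : ∃ γ ∈ Γ, γ ^ n = x := by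
  induction n using Nat.strong_induction_on generalizing x y with
  | _ n ih =>
    obtain rfl | hn1 := eq_or_ne n 1
    · exact ⟨x, hx, pow_one x⟩
    obtain ⟨p, hp, a, rfl⟩ := Nat.exists_prime_and_dvd hn1
    rw [mul_comm] at hy
    obtain ⟨γ, hγ, rfl⟩ := hprime p hp (dvd_mul_right p a) x hx ⟨y ^ a, by rw [← pow_mul, hy]⟩
    obtain ⟨w, hw⟩ := hroots a p (by rw [mul_comm]) (y ^ a * (f γ)⁻¹)
      (by rw [mul_pow, ← pow_mul, hy, map_pow, inv_pow, mul_inv_cancel])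
    have hyw : (y * w⁻¹) ^ a = f γ := by
      rw [mul_pow, inv_pow, hw, mul_inv_rev, inv_inv, mul_inv_cancel_comm_assoc]
    have ha : a ≠ 0 := right_ne_zero_of_mul hn
    obtain ⟨δ, hδ, rfl⟩ := ih a (lt_mul_left (Nat.pos_of_ne_zero ha) hp.one_lt) ha
      (fun q hq hqa => hprime q hq (dvd_mul_of_dvd_right hqa p))
      (fun b k hbk => hroots b k (dvd_mul_of_dvd_right hbk p)) hγ hyw
    exact ⟨δ, hδ, by rw [← pow_mul, mul_comm]⟩

theorem IsPrimitiveRoot.exists_pow_eq_of_pow_eq_one {L : Type*} [Field L] {ζ : L} {n a k : ℕ}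
    [NeZero n] (hζ : IsPrimitiveRoot ζ n) (h : a * k ∣ n) {c : Lˣ} (hc : c ^ k = 1) :
    ∃ w : Lˣ, w ^ a = c := by
  have hak : 0 < a * k := Nat.pos_of_dvd_of_pos h (NeZero.pos n)
  have : NeZero k := ⟨by rintro rfl; simp at hak⟩
  have hη : IsPrimitiveRoot (ζ ^ (n / (a * k))) (a * k) :=
    hζ.pow (NeZero.pos n) (Nat.div_mul_cancel h).symm
  obtain ⟨i, -, hi⟩ := (hη.pow hak rfl).eq_pow_of_pow_eq_one (ξ := (c : L))
    (by simpa using congrArg Units.val hc)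
  refine ⟨(hη.isUnit hak.ne').unit ^ i, Units.ext ?_⟩
  simp only [Units.val_pow_eq_pow_val, IsUnit.unit_spec, ← hi]
  ring

theorem IsPrimitiveRoot.finrank_adjoin_le_totient {K L : Type*} [Field K] [Field L] [Algebra K L]
    {ζ : L} {k : ℕ} (hζ : IsPrimitiveRoot ζ k) (hk : 0 < k) :
    Module.finrank K K⟮ζ⟯ ≤ k.totient := by
  have hroot : aeval ζ (cyclotomic k K) = 0 := by
    rw [aeval_def, ← eval_map, map_cyclotomic]
    exact hζ.isRoot_cyclotomic hk
  rw [adjoin.finrank ((hζ.isIntegral hk).tower_top), ← natDegree_cyclotomic k K]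
  exact natDegree_le_of_dvd (minpoly.dvd K ζ hroot) (cyclotomic_ne_zero k K)

theorem exists_pow_eq_of_coprime_finrank {K F : Type*} [Field K] [Field F] [Algebra K F]
    [FiniteDimensional K F] {p : ℕ} (hp : p.Coprime (Module.finrank K F)) {x : Kˣ} {y : Fˣ}
    (hy : y ^ p = Units.map (algebraMap K F).toMonoidHom x) : ∃ z : Kˣ, z ^ p = x :=
  exists_pow_eq_of_pow_eq_pow_of_coprime hp (a := Units.map (Algebra.norm K : F →* K) y) <| by
    rw [← map_pow, hy]
    ext
    simp [Algebra.norm_algebraMap]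

theorem AlgEquiv.apply_eq_self_of_pow_eq_algebraMap {K L : Type*} [Field K] [Field L]
    [Algebra K L] {p : ℕ} (hp : Odd p) {σ τ : L ≃ₐ[K] L} (hστ : Commute σ τ)
    (hσ : ∀ c : L, c ^ p = 1 → σ c = c⁻¹) (hτ : ∀ c : L, c ^ p = 1 → τ c = c) {y : L} {x : K}
    (hy : y ^ p = algebraMap K L x) : τ y = y := by
  obtain rfl | hy0 := eq_or_ne y 0
  · exact map_zero τ
  have hroot (ρ : L ≃ₐ[K] L) : (ρ y / y) ^ p = 1 := by
    rw [div_pow, ← map_pow, hy, AlgEquiv.commutes, ← hy, div_self (pow_ne_zero p hy0)]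
  set c := τ y / y
  have hc0 : c ≠ 0 := div_ne_zero ((map_ne_zero τ).mpr hy0) hy0
  have hσc : σ c = c := by
    obtain ⟨d, hd, hσy⟩ : ∃ d, d ^ p = 1 ∧ σ y = d * y :=
      ⟨σ y / y, hroot σ, (div_mul_cancel₀ _ hy0).symm⟩
    have hd0 : d ≠ 0 := left_ne_zero_of_mul (hσy ▸ (map_ne_zero σ).mpr hy0)
    calc σ c = τ (σ y) / σ y := by
          rw [map_div₀, ← AlgEquiv.mul_apply, hστ.eq, AlgEquiv.mul_apply]
      _ = c := by rw [hσy, map_mul, hτ d hd, mul_div_mul_left _ _ hd0]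
  have hc2 : c ^ 2 = 1 :=
    calc c ^ 2 = σ c * c := by rw [sq, hσc]
      _ = 1 := by rw [hσ c (hroot τ), inv_mul_cancel₀ hc0]
  have hc1 : c ^ (2).gcd p = 1 := pow_gcd_eq_one.mpr ⟨hc2, hroot τ⟩
  rwa [Nat.coprime_two_left.mpr hp, pow_one, div_eq_one_iff_eq hy0] at hc1

namespace IsCyclotomicExtension

variable {K L : Type*} [Field K] [Field L] [Algebra K L]

theorem commute_algEquiv (n : ℕ) [NeZero n] [IsCyclotomicExtension {n} K L]
    (σ τ : L ≃ₐ[K] L) : Commute σ τ :=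
  (zeta_spec n K L).autToPow_injective K <| by rw [map_mul, map_mul, mul_comm]

variable {n : ℕ} [NeZero n] [IsCyclotomicExtension {n} K L]

theorem exists_algEquiv_apply_eq_inv (hgal : Nonempty ((L ≃ₐ[K] L) ≃* (ZMod n)ˣ)) :
    ∃ σ : L ≃ₐ[K] L, ∀ c : L, c ^ n = 1 → σ c = c⁻¹ := by
  have : FiniteDimensional K L := finiteDimensional {n} K L
  have hζ := zeta_spec n K L
  have hbij : Function.Bijective (hζ.autToPow K) :=
    (Fintype.bijective_iff_injective_and_card _).mpr
      ⟨hζ.autToPow_injective K, Fintype.card_congr hgal.some.toEquiv⟩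
  obtain ⟨σ, hσ⟩ := hbij.surjective (-1)
  refine ⟨σ, fun c hc => eq_inv_of_mul_eq_one_left ?_⟩
  obtain ⟨i, -, rfl⟩ := hζ.eq_pow_of_pow_eq_one hc
  have hdvd : n ∣ ((-1 : (ZMod n)ˣ) : ZMod n).val + 1 := by
    rw [← ZMod.natCast_eq_zero_iff]
    simp
  rw [map_pow, ← hζ.autToPow_spec K σ, hσ, ← pow_mul, ← pow_add, hζ.pow_eq_one_iff_dvd]
  exact hdvd.trans ⟨i, by ring⟩

theorem exists_pow_eq_of_pow_eq_units_map (hgal : Nonempty ((L ≃ₐ[K] L) ≃* (ZMod n)ˣ))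
    {p : ℕ} (hp : p.Prime) (hp2 : Odd p) (hpn : p ∣ n) {x : Kˣ} {y : Lˣ}
    (hy : y ^ p = Units.map (algebraMap K L).toMonoidHom x) : ∃ z : Kˣ, z ^ p = x := by
  have : FiniteDimensional K L := finiteDimensional {n} K L
  have : IsGalois K L := isGalois {n} K L
  have : NeZero p := ⟨hp.ne_zero⟩
  obtain ⟨σ, hσ⟩ := exists_algEquiv_apply_eq_inv hgal
  have hζ : IsPrimitiveRoot (zeta n K L ^ (n / p)) p :=
    (zeta_spec n K L).pow (NeZero.pos n) (Nat.div_mul_cancel hpn).symm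
  set F := K⟮zeta n K L ^ (n / p)⟯
  have hy' : (y : L) ^ p = algebraMap K L x := by simpa using congrArg Units.val hy
  have hyF : (y : L) ∈ F := by
    rw [← IsGalois.fixedField_fixingSubgroup F, mem_fixedField_iff]
    intro τ hτ
    refine AlgEquiv.apply_eq_self_of_pow_eq_algebraMap hp2 (commute_algEquiv n σ τ)
      (fun c hc => hσ c ?_) (fun c hc => ?_) hy'
    · obtain ⟨k, rfl⟩ := hpn
      rw [pow_mul, hc, one_pow]
    · obtain ⟨i, -, rfl⟩ := hζ.eq_pow_of_pow_eq_one hc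
      rw [map_pow, (mem_fixingSubgroup_iff F τ).mp hτ _ (mem_adjoin_simple_self K _)]
  have hcop : p.Coprime (Module.finrank K F) :=
    Nat.coprime_of_lt_prime Module.finrank_pos.ne'
      ((hζ.finrank_adjoin_le_totient hp.pos).trans_lt (Nat.totient_lt p hp.one_lt)) hp
  refine exists_pow_eq_of_coprime_finrank hcop (y := Units.mk0 ⟨y, hyF⟩ ?_) ?_
  · exact fun h => y.ne_zero (congrArg Subtype.val h)
  · ext
    simpa using hy'

end IsCyclotomicExtension

theorem stmt12_general {K L : Type*} [Field K] [Field L] [Algebra K L]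
    (n : ℕ+) [IsCyclotomicExtension {(n : ℕ)} K L]
    (Γ Γ' : Subgroup Kˣ)
    (hΓ' : ∀ x : Kˣ, x ∈ Γ' ↔ ∃ m : ℕ, 0 < m ∧ x ^ m ∈ Γ)
    (hcop : Nat.Coprime (n : ℕ) (2 * (Γ.subgroupOf Γ').index))
    (hgal : Nonempty ((L ≃ₐ[K] L) ≃* (ZMod (n : ℕ))ˣ)) :
    (∀ p : ℕ, p.Prime → p ∣ (n : ℕ) →
      ∀ x : Kˣ, x ∈ Γ →
        ((∃ y : Lˣ, y ^ p = Units.map (algebraMap K L).toMonoidHom x) ↔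
          ∃ γ ∈ Γ, γ ^ p = x)) ∧
    (∀ x : Kˣ, x ∈ Γ →
      ((∃ y : Lˣ, y ^ (n : ℕ) = Units.map (algebraMap K L).toMonoidHom x) ↔
        ∃ γ ∈ Γ, γ ^ (n : ℕ) = x)) := by
  set f := Units.map (algebraMap K L).toMonoidHom
  have descent (p : ℕ) (hp : p.Prime) (hpn : p ∣ n) (x : Kˣ) (hx : x ∈ Γ) :
      (∃ y : Lˣ, y ^ p = f x) → ∃ γ ∈ Γ, γ ^ p = x := by
    rintro ⟨y, hy⟩
    obtain ⟨hp2, hpidx⟩ := Nat.coprime_mul_iff_right.mp (hcop.coprime_dvd_left hpn)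
    obtain ⟨z, rfl⟩ := IsCyclotomicExtension.exists_pow_eq_of_pow_eq_units_map hgal hp
      (Nat.coprime_two_right.mp hp2) hpn hy
    have hz : z ∈ Γ' := (hΓ' z).mpr ⟨p, hp.pos, hx⟩
    exact ⟨z, Subgroup.mem_of_pow_mem_of_coprime_index (g := ⟨z, hz⟩) hpidx hx, rfl⟩
  have lift (k : ℕ) (x : Kˣ) : (∃ γ ∈ Γ, γ ^ k = x) → ∃ y : Lˣ, y ^ k = f x :=
    fun ⟨γ, _, hγ⟩ => ⟨f γ, by rw [← map_pow, hγ]⟩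
  refine ⟨fun p hp hpn x hx => ⟨descent p hp hpn x hx, lift p x⟩,
    fun x hx => ⟨fun ⟨y, hy⟩ => ?_, lift n x⟩⟩
  exact Γ.exists_mem_pow_eq_of_forall_prime_dvd f n.ne_zero descent
    (fun a k hak c hc => (IsCyclotomicExtension.zeta_spec n K L).exists_pow_eq_of_pow_eq_one hak hc)
    hx hy

/-- Let `K` be a number field, `Γ ≤ Kˣ` finitely generated with division group `Γ'`,
and `n` coprime to `2[Γ':Γ]` such that `Gal(K(μ_n)/K) ≅ (ℤ/nℤ)ˣ`. Then
`Γ ∩ (K(μ_n)ˣ)^p = Γ^p` for every prime `p ∣ n`, and `Γ ∩ (K(μ_n)ˣ)^n = Γ^n`. -/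
theorem stmt12 {K L : Type*} [Field K] [NumberField K] [Field L] [Algebra K L]
    (n : ℕ+) [IsCyclotomicExtension {(n : ℕ)} K L]
    (Γ Γ' : Subgroup Kˣ) (hΓ : Γ.FG)
    (hΓ' : ∀ x : Kˣ, x ∈ Γ' ↔ ∃ m : ℕ, 0 < m ∧ x ^ m ∈ Γ)
    (hle : Γ ≤ Γ')
    (hcop : Nat.Coprime (n : ℕ) (2 * (Γ.subgroupOf Γ').index))
    (hgal : Nonempty ((L ≃ₐ[K] L) ≃* (ZMod (n : ℕ))ˣ)) :
    (∀ p : ℕ, p.Prime → p ∣ (n : ℕ) →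
      ∀ x : Kˣ, x ∈ Γ →
        ((∃ y : Lˣ, y ^ p = Units.map (algebraMap K L).toMonoidHom x) ↔
          ∃ γ ∈ Γ, γ ^ p = x)) ∧
    (∀ x : Kˣ, x ∈ Γ →
      ((∃ y : Lˣ, y ^ (n : ℕ) = Units.map (algebraMap K L).toMonoidHom x) ↔
        ∃ γ ∈ Γ, γ ^ (n : ℕ) = x)) :=
  stmt12_general n Γ Γ' hΓ' hcop hgal
end

section
/- Let K be a number field, a ∈ K^× multiplicatively of infinite order, l a prime, and suppose that for some m the Kummer cocycle of a at level l^m is trivial on Gal(K(μ_{l^m}, a^{1/l^m})/K(μ_{l^m})). Then there is a constant λ = λ(K, l) independent of m, such that a^λ ∈ (K^×)^{l^m}. -/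
/-!
Put `D = [K : ℚ]`. Since `[ℚ(μ_n) : ℚ] = φ(n)`, the image of `Gal(K(μ_n)/K)` in `(ℤ/n)ˣ` has
index at most `D`, so it contains `(l + 1) ^ D!`: for every `m` there is `σ` acting on `μ_{l^m}`
as `x ↦ x ^ (N + 1)` with `N = (l + 1) ^ D! - 1` independent of `m`. If the `l^m`-th root `b`
of `a` lies in the abelian extension `K(μ_{l^m})`, Sah's lemma applied to the Kummer cocycle
`c(τ) = τ b / b` shows that `b ^ N / c(σ)` lies in `K`, so `a ^ N` is an `l^m`-th power in `K`.
As the prime-to-`l` part of `N` is invertible modulo `l^m`, already `a ^ λ` with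
`λ = l ^ v_l(N)` is an `l^m`-th power.
-/

open IntermediateField Module Nat

theorem Subgroup.pow_factorial_mem_of_index_le {G : Type*} [CommGroup G] (H : Subgroup G)
    [H.FiniteIndex] {D : ℕ} (hD : H.index ≤ D) (x : G) : x ^ D ! ∈ H := by
  obtain ⟨k, hk⟩ := Nat.dvd_factorial (Nat.pos_of_ne_zero FiniteIndex.index_ne_zero) hD
  rw [hk, pow_mul]
  exact H.pow_mem (H.pow_index_mem x) k

theorem exists_pow_eq_pow_of_coprime {G : Type*} [CommGroup G] {x y : G} {n d w : ℕ}
    (hw : w.Coprime n) (h : y ^ n = x ^ (d * w)) : ∃ z : G, z ^ n = x ^ d := by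
  have hbezout : (w : ℤ) * w.gcdA n + n * w.gcdB n = 1 := by
    rw [← Nat.gcd_eq_gcd_ab, hw.gcd_eq_one, Nat.cast_one]
  refine ⟨y ^ w.gcdA n * x ^ ((d : ℤ) * w.gcdB n), ?_⟩
  calc (y ^ w.gcdA n * x ^ ((d : ℤ) * w.gcdB n)) ^ n
      = (y ^ n) ^ w.gcdA n * x ^ ((d : ℤ) * (n * w.gcdB n)) := by
        simp only [← zpow_natCast, mul_zpow, ← zpow_mul]
        ring_nf
    _ = x ^ ((d : ℤ) * (w * w.gcdA n + n * w.gcdB n)) := by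
        rw [h, ← zpow_natCast, ← zpow_mul, ← zpow_add]
        push_cast
        ring_nf
    _ = x ^ d := by rw [hbezout, mul_one, zpow_natCast]

theorem IsPrimitiveRoot.totient_le_finrank_rat {E : Type*} [Field E] [CharZero E]
    [FiniteDimensional ℚ E] {n : ℕ} [NeZero n] {ζ : E} (hζ : IsPrimitiveRoot ζ n) :
    n.totient ≤ finrank ℚ E := by
  rw [← Polynomial.natDegree_cyclotomic n ℚ,
    Polynomial.cyclotomic_eq_minpoly_rat hζ (NeZero.pos n)]
  exact minpoly.natDegree_le ζ

section Cyclotomic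

variable {K E : Type*} [Field K] [NumberField K] [Field E] [Algebra K E] {n : ℕ} [NeZero n]
  [IsCyclotomicExtension {n} K E]

theorem IsPrimitiveRoot.index_range_autToPow_le {ζ : E} (hζ : IsPrimitiveRoot ζ n) :
    (hζ.autToPow K).range.index ≤ finrank ℚ K := by
  have : FiniteDimensional K E := IsCyclotomicExtension.finiteDimensional {n} K E
  have : CharZero E := charZero_of_injective_algebraMap (algebraMap K E).injective
  have : IsGalois K E := IsCyclotomicExtension.isGalois {n} K E
  have : FiniteDimensional ℚ E := Module.Finite.trans K E
  set H := (hζ.autToPow K).range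
  have hcard : Nat.card H = finrank K E := by
    rw [← Nat.card_congr (MonoidHom.ofInjective (hζ.autToPow_injective K)).toEquiv,
      IsGalois.card_aut_eq_finrank]
  have hindex : H.index * finrank K E = n.totient := by
    rw [← hcard, H.index_mul_card, Nat.card_eq_fintype_card, ZMod.card_units_eq_totient]
  have htower : n.totient ≤ finrank ℚ K * finrank K E :=
    (Module.finrank_mul_finrank ℚ K E).symm ▸ hζ.totient_le_finrank_rat
  exact Nat.le_of_mul_le_mul_right (hindex ▸ htower) finrank_pos

theorem IsCyclotomicExtension.exists_algEquiv_apply_eq_pow {k : ℕ} (hk : k.Coprime n) :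
    ∃ σ : E ≃ₐ[K] E, ∀ x : E, x ^ n = 1 → σ x = x ^ k ^ (Module.finrank ℚ K)! := by
  have hζ := IsCyclotomicExtension.zeta_spec n K E
  obtain ⟨σ, hσ⟩ := (hζ.autToPow K).range.pow_factorial_mem_of_index_le
    hζ.index_range_autToPow_le (ZMod.unitOfCoprime k hk)
  refine ⟨σ, fun x hx => ?_⟩
  obtain ⟨i, -, rfl⟩ := hζ.eq_pow_of_pow_eq_one hx
  rw [map_pow, ← hζ.autToPow_spec K σ, hσ, Units.val_pow_eq_pow_val, ZMod.coe_unitOfCoprime,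
    ← Nat.cast_pow, ZMod.val_natCast, ← pow_mul, ← pow_mul, mul_comm]
  exact pow_eq_pow_of_modEq ((Nat.mod_modEq _ n).mul_left i) hζ.pow_eq_one

end Cyclotomic

section Kummer

variable {K E : Type*} [Field K] [Field E] [Algebra K E] {n N : ℕ} {a : K} {b : E}

variable (K) in
def kummerCocycle (b : E) (τ : E ≃ₐ[K] E) : E := τ b / b

theorem kummerCocycle_pow_eq_one (τ : E ≃ₐ[K] E) (hb0 : b ≠ 0)
    (hb : b ^ n = algebraMap K E a) : kummerCocycle K b τ ^ n = 1 := by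
  rw [kummerCocycle, div_pow, ← map_pow, hb, AlgEquiv.commutes, ← hb,
    div_self (pow_ne_zero n hb0)]

/-- Sah's lemma for the Kummer cocycle. -/
theorem apply_kummerCocycle_of_commute (σ τ : E ≃ₐ[K] E) (hστ : σ * τ = τ * σ)
    (hσ : ∀ x : E, x ^ n = 1 → σ x = x ^ (N + 1)) (hb0 : b ≠ 0)
    (hb : b ^ n = algebraMap K E a) :
    τ (kummerCocycle K b σ) = kummerCocycle K b τ ^ N * kummerCocycle K b σ := by
  set c := kummerCocycle K b τ
  set u := kummerCocycle K b σ
  have hc0 : c ≠ 0 := div_ne_zero ((map_ne_zero_iff τ τ.injective).mpr hb0) hb0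
  have hσc : σ c = c ^ (N + 1) := hσ c (kummerCocycle_pow_eq_one τ hb0 hb)
  have hτb : τ b = c * b := (div_mul_cancel₀ _ hb0).symm
  have hσb : σ b = u * b := (div_mul_cancel₀ _ hb0).symm
  have hcocycle : τ u * c * b = c ^ (N + 1) * u * b := by
    calc τ u * c * b = τ (σ b) := by rw [hσb, map_mul, hτb, mul_assoc]
      _ = σ (τ b) := by rw [← AlgEquiv.mul_apply, ← hστ, AlgEquiv.mul_apply]
      _ = c ^ (N + 1) * u * b := by rw [hτb, map_mul, hσc, hσb, mul_assoc]
  apply mul_right_cancel₀ hc0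
  rw [mul_right_cancel₀ hb0 hcocycle]
  ring

theorem exists_pow_eq_pow_of_commute [FiniteDimensional K E] [IsGalois K E] (σ : E ≃ₐ[K] E)
    (hσcomm : ∀ τ, σ * τ = τ * σ) (hσ : ∀ x : E, x ^ n = 1 → σ x = x ^ (N + 1))
    (hb0 : b ≠ 0) (hb : b ^ n = algebraMap K E a) : ∃ c : K, c ^ n = a ^ N := by
  have hfixed : ∀ τ : E ≃ₐ[K] E,
      τ (b ^ N / kummerCocycle K b σ) = b ^ N / kummerCocycle K b σ := fun τ => by
    have hτb0 : τ b ≠ 0 := (map_ne_zero_iff τ τ.injective).mpr hb0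
    rw [map_div₀, apply_kummerCocycle_of_commute σ τ (hσcomm τ) hσ hb0 hb, map_pow,
      kummerCocycle, kummerCocycle, div_pow]
    field_simp
  obtain ⟨c, hc⟩ := (IsGalois.mem_range_algebraMap_iff_fixed _).mpr hfixed
  refine ⟨c, (algebraMap K E).injective ?_⟩
  rw [map_pow, hc, div_pow, kummerCocycle_pow_eq_one σ hb0 hb, div_one, ← pow_mul, mul_comm,
    pow_mul, hb, map_pow]

end Kummer

theorem exists_pow_eq_pow_of_roots_mem_adjoin_roots_of_unity {K : Type*} [Field K]
    [NumberField K] {n N k : ℕ} [NeZero n] (hk : k.Coprime n)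
    (hN : N + 1 = k ^ (finrank ℚ K)!) {a : K} (ha : a ≠ 0)
    (hroots : ∀ b : AlgebraicClosure K, b ^ n = algebraMap K (AlgebraicClosure K) a →
      b ∈ adjoin K {x : AlgebraicClosure K | x ^ n = 1}) :
    ∃ c : K, c ^ n = a ^ N := by
  set E := adjoin K {x : AlgebraicClosure K | x ^ n = 1}
  have : IsCyclotomicExtension {n} K E := by
    have hS : {x : AlgebraicClosure K | x ^ n = 1} =
        {x | ∃ m ∈ ({n} : Set ℕ), m ≠ 0 ∧ x ^ m = 1} := by
      simp [NeZero.ne n]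
    rw [show E = _ from congrArg (adjoin K) hS]
    exact isCyclotomicExtension_adjoin_of_exists_isPrimitiveRoot {n} K _ fun m hm hm0 =>
      IsCyclotomicExtension.exists_isPrimitiveRoot (AlgebraicClosure K)
        (B := AlgebraicClosure K) hm hm0
  have := IsCyclotomicExtension.finiteDimensional {n} K E
  have := IsCyclotomicExtension.isGalois {n} K E
  have := IsCyclotomicExtension.isMulCommutative {n} K E
  obtain ⟨σ, hσ⟩ := IsCyclotomicExtension.exists_algEquiv_apply_eq_pow (K := K) (E := E) hk
  obtain ⟨b, hb⟩ :=
    IsAlgClosed.exists_pow_nat_eq (algebraMap K (AlgebraicClosure K) a) (NeZero.pos n)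
  have hb0 : b ≠ 0 := by
    rintro rfl
    exact ha (by simpa [NeZero.ne n] using hb.symm)
  exact exists_pow_eq_pow_of_commute σ (fun τ => Std.Commutative.comm (op := (· * ·)) σ τ)
    (fun x hx => hN ▸ hσ x hx) (b := ⟨b, hroots b hb⟩) (fun h => hb0 (congrArg Subtype.val h))
    (Subtype.ext hb)

theorem stmt17_general {K : Type*} [Field K] [NumberField K] (l : ℕ) (hl : l.Prime)
    (a : Kˣ) :
    ∃ lam : ℕ, 0 < lam ∧ ∀ m : ℕ,
      (∀ b : AlgebraicClosure K, b ^ (l ^ m) = algebraMap K (AlgebraicClosure K) (a : K) →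
        b ∈ IntermediateField.adjoin K {x : AlgebraicClosure K | x ^ (l ^ m) = 1}) →
      ∃ c : K, c ^ (l ^ m) = (a : K) ^ lam := by
  have : NeZero l := ⟨hl.ne_zero⟩
  set N := (l + 1) ^ (finrank ℚ K)! - 1
  have hN : N + 1 = (l + 1) ^ (finrank ℚ K)! :=
    Nat.sub_add_cancel (Nat.one_le_pow _ _ (by omega))
  have hN0 : N ≠ 0 := by
    have := Nat.le_self_pow (factorial_ne_zero (finrank ℚ K)) (l + 1)
    have := hl.two_le
    omega
  refine ⟨ordProj[l] N, pow_pos hl.pos _, fun m hroots => ?_⟩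
  have hcop : (ordCompl[l] N).Coprime (l ^ m) :=
    ((hl.coprime_iff_not_dvd.mpr (Nat.not_dvd_ordCompl hl hN0)).symm).pow_right m
  obtain ⟨c, hc⟩ := exists_pow_eq_pow_of_roots_mem_adjoin_roots_of_unity
    ((Nat.coprime_self_add_left.mpr (Nat.coprime_one_left l)).pow_right m) hN a.ne_zero hroots
  have hc0 : c ≠ 0 := by
    rintro rfl
    exact pow_ne_zero N a.ne_zero (by simpa [hl.ne_zero] using hc.symm)
  obtain ⟨z, hz⟩ := exists_pow_eq_pow_of_coprime (x := a) (y := Units.mk0 c hc0)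
    (d := ordProj[l] N) hcop (Units.ext (by simp [hc, Nat.ordProj_mul_ordCompl_eq_self]))
  exact ⟨z, by simpa using congrArg Units.val hz⟩

/-- Let `K` be a number field, `a ∈ Kˣ` of infinite multiplicative order and `l` a
prime. There is a constant `λ = λ(K,l)`, independent of `m`, such that whenever the
Kummer cocycle of `a` at level `l^m` is trivial on
`Gal(K(μ_{l^m}, a^{1/l^m})/K(μ_{l^m}))` (i.e. every `l^m`-th root of `a` in the
algebraic closure already lies in `K(μ_{l^m})`), one has `a^λ ∈ (Kˣ)^{l^m}`. -/
theorem stmt17 {K : Type*} [Field K] [NumberField K] (l : ℕ) (hl : l.Prime)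
    (a : Kˣ) (ha : ¬ IsOfFinOrder a) :
    ∃ lam : ℕ, 0 < lam ∧ ∀ m : ℕ,
      (∀ b : AlgebraicClosure K, b ^ (l ^ m) = algebraMap K (AlgebraicClosure K) (a : K) →
        b ∈ IntermediateField.adjoin K {x : AlgebraicClosure K | x ^ (l ^ m) = 1}) →
      ∃ c : K, c ^ (l ^ m) = (a : K) ^ lam :=
  stmt17_general l hl a
end
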